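/- arXiv:2010.16315 — 5 statements merged into one kernel-verified Lean document; each statement's English description precedes it below -/
import Mathlib

section
/- In every connected graph G, for every power dominating set S, |S| ≥ |V(G)| / (pt_pd(G;S)·Δ(G) + 1), where Δ(G) is the maximum degree. -/
open SimpleGraph Set

variable {V : Type*} {W : Type*}

/-- The closed neighborhood of a set `S`. -/
def closedNbhdSet (G : SimpleGraph V) (S : Set V) : Set V :=
  S ∪ {w | ∃ u ∈ S, G.Adj u w}

/-- One round of the zero forcing propagation step. -/
def pdStep (G : SimpleGraph V) (A : Set V) : Set V :=
  A ∪ {w | ∃ u ∈ A, G.neighborSet u \ A = {w}}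

/-- `obs G S k` is the set `P^[k](S)` of vertices observed after round `k`. -/
def obs (G : SimpleGraph V) (S : Set V) : ℕ → Set V
  | 0 => S
  | 1 => closedNbhdSet G S
  | (n + 2) => pdStep G (obs G S (n + 1))

/-- `S` is a power dominating set. -/
def IsPDS (G : SimpleGraph V) (S : Set V) : Prop :=
  ∃ t, obs G S t = Set.univ

/-- The power propagation time `pt_pd(G;S)`: least positive `t` with `P^[t](S) = V(G)`. -/
noncomputable def ptpd (G : SimpleGraph V) (S : Set V) : ℕ :=
  sInf {t | 1 ≤ t ∧ obs G S t = Set.univ}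

/-- `S` is a dominating set. -/
def IsDomSet (G : SimpleGraph V) (S : Set V) : Prop :=
  closedNbhdSet G S = Set.univ

/-- The domination number `γ(G)`. -/
noncomputable def gamma (G : SimpleGraph V) : ℕ :=
  sInf {k | ∃ S : Set V, IsDomSet G S ∧ S.ncard = k}

/-- The power domination number `γ_P(G)`. -/
noncomputable def gammaP (G : SimpleGraph V) : ℕ :=
  sInf {k | ∃ S : Set V, IsPDS G S ∧ S.ncard = k}

/-- The product power throttling number `th_pd^×(G)`. -/
noncomputable def thpd (G : SimpleGraph V) : ℕ :=
  sInf {m | ∃ S : Set V, IsPDS G S ∧ m = S.ncard * ptpd G S}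

/-- The power propagation time of `G`: minimum over minimum power dominating sets. -/
noncomputable def ptG (G : SimpleGraph V) : ℕ :=
  sInf {t | ∃ S : Set V, IsPDS G S ∧ S.ncard = gammaP G ∧ t = ptpd G S}

/-- `newObs G S k` is `P^(k)(S)`, the set of vertices first observed in round `k`. -/
def newObs (G : SimpleGraph V) (S : Set V) : ℕ → Set V
  | 0 => S
  | (k + 1) => obs G S (k + 1) \ obs G S k

/-- `rd G S v` is the round in which `v` is first observed. -/
noncomputable def rd (G : SimpleGraph V) (S : Set V) (v : V) : ℕ :=
  sInf {k | v ∈ obs G S k}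

/-
Every vertex of `N[S] \ S` starts a forcing chain, and every vertex observed in a round `k ≥ 2`
is the next link of exactly one chain, which receives at most one new vertex per round.
Hence `|V| ≤ |S| + |N[S] \ S| · pt_pd(G;S) ≤ |S| (pt_pd(G;S) Δ + 1)`.
-/

open Finset in
/-- Iterating `f` from an element of `s` lowers the rank until the orbit leaves `s` through `t`;
by injectivity these chains are disjoint, so `s` is covered by at most `#t` chains of length at
most `n`. -/
theorem Finset.card_le_mul_card_of_injOn_of_rank_lt {α : Type*} [DecidableEq α]
    {f : α → α} {r : α → ℕ} (n : ℕ) {s t : Finset α} (hinj : Set.InjOn f s)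
    (hmaps : ∀ v ∈ s, f v ∈ s ∪ t) (hr : ∀ v ∈ s, r (f v) < r v) (hn : ∀ v ∈ s, r v ≤ n) :
    #s ≤ n * #t := by
  induction n generalizing r s t with
  | zero =>
    have : s = ∅ := eq_empty_of_forall_notMem fun v hv => by
      have := hr v hv; have := hn v hv; omega
    simp [this]
  | succ n ih =>
    have hlast : #(s.filter (f · ∉ s)) ≤ #t := by
      refine card_le_card_of_injOn f (fun v hv => ?_) (hinj.mono (filter_subset _ s))
      obtain ⟨hvs, hfv⟩ := mem_filter.mp hv
      simpa [hfv] using hmaps v hvs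
    have hrest : #(s.filter (f · ∈ s)) ≤ n * #(s.filter (f · ∉ s)) := by
      refine ih (r := (r · - 1)) (hinj.mono (filter_subset _ s)) (fun v hv => ?_)
        (fun v hv => ?_) (fun v hv => ?_)
      · obtain ⟨-, hfv⟩ := mem_filter.mp hv
        by_cases hffv : f (f v) ∈ s <;> simp [hfv, hffv]
      · obtain ⟨hvs, hfv⟩ := mem_filter.mp hv
        have := hr v hvs; have := hr (f v) hfv; omega
      · have := hn v (mem_filter.mp hv).1; omega
    have hsplit := card_filter_add_card_filter_not (s := s) (f · ∈ s)
    nlinarith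

/-- `Forces G S k u v`: in round `k + 1`, the observed vertex `u` observes its only unobserved
neighbour `v`. -/
def Forces (G : SimpleGraph V) (S : Set V) (k : ℕ) (u v : V) : Prop :=
  u ∈ obs G S k ∧ G.neighborSet u \ obs G S k = {v}

section Observation

variable (G : SimpleGraph V) (S : Set V)

lemma obs_mono : Monotone (obs G S) :=
  monotone_nat_of_le_succ fun
    | 0 => subset_union_left
    | _ + 1 => subset_union_left

variable {G S}

lemma rd_le_of_mem_obs {v : V} {k : ℕ} (h : v ∈ obs G S k) : rd G S v ≤ k :=
  Nat.sInf_le h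

lemma notMem_obs_of_lt_rd {v : V} {k : ℕ} (h : k < rd G S v) : v ∉ obs G S k :=
  fun hv => (rd_le_of_mem_obs hv).not_gt h

lemma mem_obs_rd_of_pos {v : V} (h : 0 < rd G S v) : v ∈ obs G S (rd G S v) :=
  Nat.sInf_mem (Nat.nonempty_of_pos_sInf h)

lemma notMem_of_rd_pos {v : V} (h : 0 < rd G S v) : v ∉ S :=
  fun hv => (rd_le_of_mem_obs (k := 0) hv).not_gt h

lemma IsPDS.mem_obs_rd (hS : IsPDS G S) (v : V) : v ∈ obs G S (rd G S v) := by
  obtain ⟨t, ht⟩ := hS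
  exact Nat.sInf_mem (s := {k | v ∈ obs G S k}) ⟨t, show v ∈ obs G S t by rw [ht]; trivial⟩

lemma IsPDS.mem_of_rd_eq_zero (hS : IsPDS G S) {v : V} (h : rd G S v = 0) : v ∈ S := by
  have hv := hS.mem_obs_rd v
  rwa [h] at hv

lemma IsPDS.ptpd_mem (hS : IsPDS G S) : ptpd G S ∈ {t | 1 ≤ t ∧ obs G S t = univ} := by
  obtain ⟨t, ht⟩ := hS
  refine Nat.sInf_mem ⟨max t 1, le_max_right t 1, eq_univ_of_univ_subset ?_⟩
  exact ht ▸ obs_mono G S (le_max_left t 1)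

lemma IsPDS.rd_le_ptpd (hS : IsPDS G S) (v : V) : rd G S v ≤ ptpd G S :=
  rd_le_of_mem_obs (by rw [hS.ptpd_mem.2]; trivial)

lemma IsPDS.exists_forces (hS : IsPDS G S) {v : V} (hv : 2 ≤ rd G S v) :
    ∃ u, Forces G S (rd G S v - 1) u v := by
  obtain ⟨k, hk⟩ : ∃ k, rd G S v = k + 2 := ⟨rd G S v - 2, by omega⟩
  have hmem := hS.mem_obs_rd v
  rw [hk] at hmem
  rcases (hmem : v ∈ pdStep G (obs G S (k + 1))) with hmem | ⟨u, hu, huv⟩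
  · exact absurd hmem (notMem_obs_of_lt_rd (by omega))
  · exact ⟨u, by rwa [hk], by rwa [hk]⟩

lemma Forces.notMem {k : ℕ} {u v : V} (h : Forces G S k u v) (hk : 1 ≤ k) : u ∉ S := by
  intro huS
  have hv : v ∈ G.neighborSet u \ obs G S k := h.2 ▸ rfl
  exact hv.2 (obs_mono G S hk (Or.inr ⟨u, huS, hv.1⟩))

lemma Forces.right_unique {k l : ℕ} {u v w : V} (hv : Forces G S k u v)
    (hw : Forces G S l u w) : v = w := by
  wlog hkl : k ≤ l generalizing k l v w
  · exact (this hw hv (by omega)).symm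
  have : G.neighborSet u \ obs G S l ⊆ G.neighborSet u \ obs G S k :=
    sdiff_subset_sdiff_right (obs_mono G S hkl)
  rw [hv.2, hw.2] at this
  exact (singleton_subset_singleton.mp this).symm

end Observation

section Counting

open Finset

variable [Fintype V] {G : SimpleGraph V} {S : Set V}

lemma IsPDS.card_le_ncard_add_card_filter_rd (hS : IsPDS G S) :
    Fintype.card V ≤ S.ncard + #{v | rd G S v = 1} + #{v | 2 ≤ rd G S v} := by
  classical
  rw [ncard_eq_toFinset_card', ← card_univ]
  refine (card_le_card fun v _ => ?_).trans
    ((Finset.card_union_le _ _).trans (Nat.add_le_add_right (Finset.card_union_le _ _) _))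
  rcases (by omega : rd G S v = 0 ∨ rd G S v = 1 ∨ 2 ≤ rd G S v) with h | h | h
  · simp [hS.mem_of_rd_eq_zero h]
  · simp [h]
  · simp [h]

lemma card_filter_rd_eq_one_le_ncard_mul_maxDegree [DecidableRel G.Adj] :
    #{v | rd G S v = 1} ≤ S.ncard * G.maxDegree := by
  classical
  calc #{v | rd G S v = 1}
      ≤ #(S.toFinset.biUnion fun u => G.neighborFinset u) := card_le_card fun v hv => by
        have h1 : rd G S v = 1 := (mem_filter.mp hv).2
        have hpos : 0 < rd G S v := by omega
        have hv1 := mem_obs_rd_of_pos hpos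
        rw [h1] at hv1
        rcases hv1 with hvS | ⟨u, hu, huv⟩
        · exact absurd hvS (notMem_of_rd_pos hpos)
        · exact mem_biUnion.mpr ⟨u, Set.mem_toFinset.mpr hu, (G.mem_neighborFinset u v).mpr huv⟩
    _ ≤ #S.toFinset * G.maxDegree :=
        card_biUnion_le_card_mul _ _ _ fun u _ => G.degree_le_maxDegree u
    _ = S.ncard * G.maxDegree := by rw [ncard_eq_toFinset_card']

lemma IsPDS.card_filter_two_le_rd_le_mul (hS : IsPDS G S) :
    #{v | 2 ≤ rd G S v} ≤ (ptpd G S - 1) * #{v | rd G S v = 1} := by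
  classical
  have : ∀ v, ∃ u, 2 ≤ rd G S v → Forces G S (rd G S v - 1) u v := fun v =>
    if hv : 2 ≤ rd G S v then (hS.exists_forces hv).imp fun _ h _ => h
    else ⟨v, fun h => absurd h hv⟩
  choose f hf using this
  refine card_le_mul_card_of_injOn_of_rank_lt (f := f) (r := (rd G S · - 1)) _
    (fun v hv w hw hvw => ?_) (fun v hv => ?_) (fun v hv => ?_) (fun v hv => ?_)
  · simp only [coe_filter, Finset.mem_univ, true_and, Set.mem_ofPred] at hv hw
    exact (hf v hv).right_unique (hvw ▸ hf w hw)
  all_goals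
    have hv : 2 ≤ rd G S v := (mem_filter.mp hv).2
  · have hfv : rd G S (f v) ≠ 0 := fun h0 =>
      (hf v hv).notMem (by omega) (hS.mem_of_rd_eq_zero h0)
    simp only [Finset.mem_union, mem_filter, Finset.mem_univ, true_and]
    omega
  · have := rd_le_of_mem_obs (hf v hv).1
    omega
  · have := hS.rd_le_ptpd v
    omega

end Counting

theorem stmt3_general [Fintype V] (G : SimpleGraph V) [DecidableRel G.Adj]
    (S : Set V) (hS : IsPDS G S) :
    (Fintype.card V : ℝ) / (ptpd G S * G.maxDegree + 1) ≤ (S.ncard : ℝ) := by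
  obtain ⟨T, hT⟩ := Nat.exists_eq_add_of_le' hS.ptpd_mem.1
  have hV := hS.card_le_ncard_add_card_filter_rd
  have hA := card_filter_rd_eq_one_le_ncard_mul_maxDegree (G := G) (S := S)
  have hD := hS.card_filter_two_le_rd_le_mul
  rw [hT, Nat.add_sub_cancel] at hD
  have key : Fintype.card V ≤ S.ncard * (ptpd G S * G.maxDegree + 1) := by
    rw [hT]; nlinarith
  rw [div_le_iff₀ (by positivity)]
  exact_mod_cast key

theorem stmt3 [Fintype V] (G : SimpleGraph V) [DecidableRel G.Adj] (hG : G.Connected)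
    (S : Set V) (hS : IsPDS G S) :
    (Fintype.card V : ℝ) / (ptpd G S * G.maxDegree + 1) ≤ (S.ncard : ℝ) :=
  stmt3_general G S hS
end

section
/- Let G be a connected graph with γ(G) ≤ b. If γ_P(G) ≥ b/2, then th_pd×(G) = γ(G). In particular, if γ_P(G) ≥ γ(G)/2, then th_pd×(G) = γ(G). -/
open SimpleGraph Set

variable {V : Type*} {W : Type*}

lemma univ_dom' (G : SimpleGraph V) : IsDomSet G (Set.univ : Set V) := by
  simp [IsDomSet, closedNbhdSet]

lemma obs_one' (G : SimpleGraph V) (S : Set V) : obs G S 1 = closedNbhdSet G S := rfl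

lemma gamma_mem' [Fintype V] (G : SimpleGraph V) :
    ∃ S : Set V, IsDomSet G S ∧ S.ncard = gamma G :=
  Nat.sInf_mem (⟨(Set.univ : Set V).ncard, Set.univ, univ_dom' G, rfl⟩ :
    Set.Nonempty {k | ∃ S : Set V, IsDomSet G S ∧ S.ncard = k})

lemma ptpd_dom' (G : SimpleGraph V) {S : Set V} (hS : IsDomSet G S) : ptpd G S = 1 := by
  have h1 : (1 : ℕ) ∈ {t | 1 ≤ t ∧ obs G S t = Set.univ} := ⟨le_refl 1, hS⟩
  have hle := Nat.sInf_le h1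
  have hmem : 1 ≤ ptpd G S ∧ obs G S (ptpd G S) = Set.univ :=
    Nat.sInf_mem (⟨1, h1⟩ : Set.Nonempty {t | 1 ≤ t ∧ obs G S t = Set.univ})
  have h2 : ptpd G S ≤ 1 := hle
  have := hmem.1
  omega

lemma ptpd_ge_two' (G : SimpleGraph V) {S : Set V} (hP : IsPDS G S) (hnd : ¬ IsDomSet G S) :
    2 ≤ ptpd G S := by
  obtain ⟨t, ht⟩ := hP
  have ht1 : 1 ≤ t := by
    rcases Nat.eq_zero_or_pos t with h | h
    · exfalso
      apply hnd
      have hS : S = Set.univ := by rw [h] at ht; exact ht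
      rw [hS]; exact univ_dom' G
    · exact h
  have hne : Set.Nonempty {t | 1 ≤ t ∧ obs G S t = Set.univ} := ⟨t, ht1, ht⟩
  have hmem : 1 ≤ ptpd G S ∧ obs G S (ptpd G S) = Set.univ := Nat.sInf_mem hne
  by_contra h
  push_neg at h
  have h1 : ptpd G S = 1 := by omega
  apply hnd
  have := hmem.2
  rw [h1] at this
  exact this

theorem stmt8 [Fintype V] (G : SimpleGraph V) (hG : G.Connected) :
    (∀ b : ℕ, gamma G ≤ b → (b : ℝ) / 2 ≤ (gammaP G : ℝ) → thpd G = gamma G) ∧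
    ((gamma G : ℝ) / 2 ≤ (gammaP G : ℝ) → thpd G = gamma G) :=  by
  have main : ∀ b : ℕ, gamma G ≤ b → (b : ℝ) / 2 ≤ (gammaP G : ℝ) → thpd G = gamma G := by
    intro b hb hbp
    have hb2 : b ≤ 2 * gammaP G := by
      have : (b : ℝ) ≤ 2 * (gammaP G : ℝ) := by linarith
      exact_mod_cast this
    obtain ⟨D, hD, hDcard⟩ := gamma_mem' G
    have hDpds : IsPDS G D := ⟨1, hD⟩
    have hmem : gamma G ∈ {m | ∃ S : Set V, IsPDS G S ∧ m = S.ncard * ptpd G S} :=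
      ⟨D, hDpds, by rw [ptpd_dom' G hD, mul_one, hDcard]⟩
    have hle : thpd G ≤ gamma G := Nat.sInf_le hmem
    have hge : gamma G ≤ thpd G := by
      obtain ⟨S, hS, hSeq⟩ : ∃ S : Set V, IsPDS G S ∧ thpd G = S.ncard * ptpd G S :=
        Nat.sInf_mem (⟨gamma G, hmem⟩ :
          Set.Nonempty {m | ∃ S : Set V, IsPDS G S ∧ m = S.ncard * ptpd G S})
      by_cases hdom : IsDomSet G S
      · have h1 : gamma G ≤ S.ncard := Nat.sInf_le ⟨S, hdom, rfl⟩
        rw [hSeq, ptpd_dom' G hdom, mul_one]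
        exact h1
      · have h2 := ptpd_ge_two' G hS hdom
        have hScard : gammaP G ≤ S.ncard := Nat.sInf_le ⟨S, hS, rfl⟩
        have h3 : 2 * gammaP G ≤ S.ncard * ptpd G S := by nlinarith
        rw [hSeq]
        omega
    omega
  exact ⟨main, main (gamma G) le_rfl⟩
end

section
/- Let G be a connected graph of order n ≥ 2. If γ_P(G) ≥ n/4, then th_pd×(G) = γ(G). -/
/-!
A minimum dominating set observes every vertex in one round, so `th_pd^×(G) ≤ γ(G)`.
Conversely, a power dominating set `S` with propagation time `1` is dominating, so
`|S| · 1 ≥ γ(G)`, while one with propagation time `t ≥ 2` has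
`|S| · t ≥ 2 γ_P(G) ≥ n / 2 ≥ γ(G)`.
-/

open SimpleGraph Set

variable {V : Type*} {W : Type*}

section Domination

variable (G : SimpleGraph V)

theorem isDomSet_univ : IsDomSet G univ := by
  simp [IsDomSet, closedNbhdSet]

theorem gamma_le_ncard {S : Set V} (hS : IsDomSet G S) : gamma G ≤ S.ncard :=
  Nat.sInf_le ⟨S, hS, rfl⟩

theorem exists_isDomSet_ncard_eq_gamma : ∃ S, IsDomSet G S ∧ S.ncard = gamma G :=
  Nat.sInf_mem (s := {k | ∃ S, IsDomSet G S ∧ S.ncard = k}) ⟨_, univ, isDomSet_univ G, rfl⟩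

theorem isDomSet_of_maximal_isIndepSet {M : Set V} (hM : Maximal G.IsIndepSet M) :
    IsDomSet G M := by
  refine eq_univ_of_forall fun v => ?_
  by_contra hv
  simp only [closedNbhdSet, mem_union, mem_ofPred_eq, not_or, not_exists, not_and] at hv
  obtain ⟨hvM, hnbr⟩ := hv
  have hindep : G.IsIndepSet (insert v M) :=
    pairwise_insert.2 ⟨hM.prop, fun u hu _ => ⟨fun hvu => hnbr u hu hvu.symm, hnbr u hu⟩⟩
  exact hvM (hM.mem_of_prop_insert hindep)

theorem isDomSet_compl_of_isIndepSet (hG : ∀ v, ∃ w, G.Adj v w) {M : Set V}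
    (hM : G.IsIndepSet M) : IsDomSet G Mᶜ := by
  refine eq_univ_of_forall fun v => ?_
  by_cases hv : v ∈ M
  · obtain ⟨w, hvw⟩ := hG v
    have hw : w ∉ M := fun hw => hM hv hw (G.ne_of_adj hvw) hvw
    exact Or.inr ⟨w, hw, hvw.symm⟩
  · exact Or.inl hv

theorem two_mul_gamma_le_card [Finite V] (hG : ∀ v, ∃ w, G.Adj v w) :
    2 * gamma G ≤ Nat.card V := by
  obtain ⟨M, -, hM⟩ := Finite.exists_le_maximal (p := G.IsIndepSet) (pairwise_empty _)
  have hle := gamma_le_ncard G (isDomSet_of_maximal_isIndepSet G hM)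
  have hle' := gamma_le_ncard G (isDomSet_compl_of_isIndepSet G hG hM.prop)
  have hsum := ncard_add_ncard_compl M
  omega

end Domination

section PowerDomination

variable {G : SimpleGraph V} {S : Set V}

theorem obs_one_eq_univ_iff : obs G S 1 = univ ↔ IsDomSet G S := Iff.rfl

theorem gammaP_le_ncard (hS : IsPDS G S) : gammaP G ≤ S.ncard :=
  Nat.sInf_le ⟨S, hS, rfl⟩

theorem ptpd_spec (hS : IsPDS G S) : 1 ≤ ptpd G S ∧ obs G S (ptpd G S) = univ := by
  refine Nat.sInf_mem (s := {t | 1 ≤ t ∧ obs G S t = univ}) ?_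
  obtain ⟨t, ht⟩ := hS
  rcases t with _ | t
  · refine ⟨1, le_rfl, ?_⟩
    rw [obs_one_eq_univ_iff, show S = univ from ht]
    exact isDomSet_univ G
  · exact ⟨t + 1, by omega, ht⟩

theorem IsDomSet.isPDS (hS : IsDomSet G S) : IsPDS G S :=
  ⟨1, hS⟩

theorem IsDomSet.ptpd_eq_one (hS : IsDomSet G S) : ptpd G S = 1 :=
  le_antisymm (Nat.sInf_le ⟨le_rfl, hS⟩) (ptpd_spec hS.isPDS).1

theorem isDomSet_of_ptpd_eq_one (hS : IsPDS G S) (h : ptpd G S = 1) : IsDomSet G S := by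
  rw [← obs_one_eq_univ_iff, ← h]
  exact (ptpd_spec hS).2

variable (G)

theorem thpd_le_gamma : thpd G ≤ gamma G := by
  obtain ⟨D, hD, hcard⟩ := exists_isDomSet_ncard_eq_gamma G
  exact Nat.sInf_le ⟨D, hD.isPDS, by rw [hD.ptpd_eq_one, hcard, mul_one]⟩

theorem exists_isPDS_thpd_eq : ∃ S, IsPDS G S ∧ thpd G = S.ncard * ptpd G S :=
  Nat.sInf_mem (s := {m | ∃ S, IsPDS G S ∧ m = S.ncard * ptpd G S})
    ⟨_, univ, (isDomSet_univ G).isPDS, rfl⟩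

theorem gamma_le_ncard_mul_ptpd (h : gamma G ≤ 2 * gammaP G) (hS : IsPDS G S) :
    gamma G ≤ S.ncard * ptpd G S := by
  obtain ⟨hpos, -⟩ := ptpd_spec hS
  rcases hpos.eq_or_lt with hone | htwo
  · rw [← hone, mul_one]
    exact gamma_le_ncard G (isDomSet_of_ptpd_eq_one hS hone.symm)
  · calc gamma G ≤ 2 * gammaP G := h
      _ ≤ S.ncard * 2 := by rw [mul_comm]; exact Nat.mul_le_mul_right 2 (gammaP_le_ncard hS)
      _ ≤ S.ncard * ptpd G S := Nat.mul_le_mul_left _ htwo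

theorem thpd_eq_gamma_of_gamma_le_two_mul_gammaP (h : gamma G ≤ 2 * gammaP G) :
    thpd G = gamma G := by
  obtain ⟨S, hS, hth⟩ := exists_isPDS_thpd_eq G
  exact (thpd_le_gamma G).antisymm (hth ▸ gamma_le_ncard_mul_ptpd G h hS)

end PowerDomination

theorem stmt9 [Fintype V] (G : SimpleGraph V) (hG : G.Connected)
    (hn : 2 ≤ Fintype.card V)
    (h : (Fintype.card V : ℝ) / 4 ≤ (gammaP G : ℝ)) :
    thpd G = gamma G := by
  have : Nontrivial V := Fintype.one_lt_card_iff_nontrivial.1 hn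
  have hγ := two_mul_gamma_le_card G hG.preconnected.exists_adj_of_nontrivial
  have hγP : Fintype.card V ≤ 4 * gammaP G := by
    exact_mod_cast (div_le_iff₀' (by norm_num : (0 : ℝ) < 4)).1 h
  rw [Nat.card_eq_fintype_card] at hγ
  exact thpd_eq_gamma_of_gamma_le_two_mul_gammaP G (by omega)
end

section
/- A connected graph G has th_pd×(G) = 2 if and only if γ(G) = 2, or (γ_P(G) = 1 and pt_pd(G) = 2). -/
open SimpleGraph Set

variable {V : Type*} {W : Type*}

lemma obs_empty (G : SimpleGraph V) : ∀ t, obs G (∅ : Set V) t = ∅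
  | 0 => rfl
  | 1 => by simp [obs, closedNbhdSet]
  | (n + 2) => by
      have ih := obs_empty G (n + 1)
      simp [obs, pdStep, ih]

lemma univ_pds (G : SimpleGraph V) : IsPDS G (Set.univ : Set V) :=
  ⟨1, by simp [obs, closedNbhdSet]⟩

lemma not_pds_empty [Nonempty V] (G : SimpleGraph V) : ¬ IsPDS G (∅ : Set V) := by
  rintro ⟨t, ht⟩
  rw [obs_empty] at ht
  exact Set.empty_ne_univ ht

lemma pds_props (G : SimpleGraph V) {S : Set V} (h : IsPDS G S) :
    1 ≤ ptpd G S ∧ obs G S (ptpd G S) = Set.univ := by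
  obtain ⟨t, ht⟩ := h
  have hne : {t | 1 ≤ t ∧ obs G S t = Set.univ}.Nonempty := by
    rcases t with _ | t
    · refine ⟨1, le_refl 1, ?_⟩
      have hS : S = Set.univ := ht
      simp [obs, closedNbhdSet, hS]
    · exact ⟨t + 1, Nat.succ_le_succ (Nat.zero_le t), ht⟩
  exact Nat.sInf_mem hne

lemma pds_ncard_pos [Fintype V] [Nonempty V] (G : SimpleGraph V) {S : Set V}
    (h : IsPDS G S) : 1 ≤ S.ncard := by
  rcases Set.eq_empty_or_nonempty S with rfl | hS
  · exact absurd h (not_pds_empty G)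
  · exact (Set.ncard_pos (Set.toFinite S)).mpr hS

lemma ptpd_eq_one (G : SimpleGraph V) {S : Set V} (h : closedNbhdSet G S = Set.univ) :
    IsPDS G S ∧ ptpd G S = 1 := by
  have h1 : obs G S 1 = Set.univ := h
  refine ⟨⟨1, h1⟩, ?_⟩
  exact le_antisymm (Nat.sInf_le ⟨le_rfl, h1⟩) (pds_props G ⟨1, h1⟩).1

theorem stmt11 [Fintype V] (G : SimpleGraph V) (hG : G.Connected) :
    thpd G = 2 ↔ (gamma G = 2 ∨ (gammaP G = 1 ∧ ptG G = 2)) := by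
  have hV : Nonempty V := hG.nonempty
  have hdomuniv : IsDomSet G (Set.univ : Set V) := by
    show Set.univ ∪ _ = Set.univ
    simp
  -- the throttling set
  set T : Set ℕ := {m | ∃ S : Set V, IsPDS G S ∧ m = S.ncard * ptpd G S} with hT
  have hTne : T.Nonempty := ⟨_, Set.univ, univ_pds G, rfl⟩
  have hTpos : ∀ m ∈ T, 1 ≤ m := by
    rintro m ⟨S, hS, rfl⟩
    exact Nat.mul_pos (pds_ncard_pos G hS) (pds_props G hS).1
  have hthpd_mem : thpd G ∈ T := Nat.sInf_mem hTne
  have hthpd_le : ∀ m ∈ T, thpd G ≤ m := fun m hm => Nat.sInf_le hm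
  -- gamma facts
  have hGne : {k | ∃ S : Set V, IsDomSet G S ∧ S.ncard = k}.Nonempty :=
    ⟨_, Set.univ, hdomuniv, rfl⟩
  have hgamma_mem : ∃ S : Set V, IsDomSet G S ∧ S.ncard = gamma G := Nat.sInf_mem hGne
  have hgamma_le : ∀ k ∈ {k | ∃ S : Set V, IsDomSet G S ∧ S.ncard = k}, gamma G ≤ k :=
    fun k hk => Nat.sInf_le hk
  -- gammaP facts
  have hPne : {k | ∃ S : Set V, IsPDS G S ∧ S.ncard = k}.Nonempty :=
    ⟨_, Set.univ, univ_pds G, rfl⟩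
  have hgammaP_mem : ∃ S : Set V, IsPDS G S ∧ S.ncard = gammaP G := Nat.sInf_mem hPne
  -- a dominating singleton yields thpd ≤ 1
  have hdom1 : ∀ S : Set V, IsDomSet G S → S.ncard = 1 → thpd G ≤ 1 := by
    intro S hS hc
    obtain ⟨hPDS, hpt⟩ := ptpd_eq_one G hS
    have : (1 : ℕ) ∈ T := ⟨S, hPDS, by rw [hc, hpt]⟩
    exact hthpd_le 1 this
  -- gamma ≥ 1 always (empty set not dominating)
  have hgamma_pos : 1 ≤ gamma G := by
    obtain ⟨S, hS, hc⟩ := hgamma_mem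
    by_contra h
    push_neg at h
    have hg : gamma G = 0 := by omega
    rw [hg] at hc
    have hSe : S = ∅ := (Set.ncard_eq_zero (Set.toFinite S)).mp hc
    rw [hSe] at hS
    have h1 : obs G (∅ : Set V) 1 = Set.univ := hS
    rw [obs_empty] at h1
    exact Set.empty_ne_univ h1
  constructor
  · -- forward direction
    intro h2
    obtain ⟨S, hPDS, hprod⟩ := hthpd_mem
    rw [h2] at hprod
    have hc1 : 1 ≤ S.ncard := pds_ncard_pos G hPDS
    have hp1 : 1 ≤ ptpd G S := (pds_props G hPDS).1
    have hcle : S.ncard ≤ 2 := Nat.le_of_dvd two_pos ⟨ptpd G S, hprod⟩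
    have hcases : (S.ncard = 1 ∧ ptpd G S = 2) ∨ (S.ncard = 2 ∧ ptpd G S = 1) := by
      set a := S.ncard with ha
      interval_cases a <;> omega
    rcases hcases with ⟨hc, hp⟩ | ⟨hc, hp⟩
    · -- gammaP = 1 and ptG = 2
      right
      have hgP_le : gammaP G ≤ 1 := Nat.sInf_le ⟨S, hPDS, hc⟩
      have hgP_pos : 1 ≤ gammaP G := by
        obtain ⟨S', hS', hc'⟩ := hgammaP_mem
        by_contra hcon
        push_neg at hcon
        have h0 : gammaP G = 0 := by omega
        rw [h0] at hc'
        have : S' = ∅ := (Set.ncard_eq_zero (Set.toFinite S')).mp hc'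
        rw [this] at hS'
        exact not_pds_empty G hS'
      have hgP : gammaP G = 1 := le_antisymm hgP_le hgP_pos
      refine ⟨hgP, ?_⟩
      have hmemPt : (2 : ℕ) ∈ {t | ∃ S' : Set V, IsPDS G S' ∧ S'.ncard = gammaP G ∧ t = ptpd G S'} :=
        ⟨S, hPDS, by rw [hgP]; exact hc, hp.symm⟩
      have hle2 : ptG G ≤ 2 := Nat.sInf_le hmemPt
      have hptG_mem : ptG G ∈ {t | ∃ S' : Set V, IsPDS G S' ∧ S'.ncard = gammaP G ∧ t = ptpd G S'} :=
        Nat.sInf_mem ⟨2, hmemPt⟩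
      obtain ⟨S', hS', hc', hp'⟩ := hptG_mem
      have hp'1 : 1 ≤ ptpd G S' := (pds_props G hS').1
      have hne1 : ptpd G S' ≠ 1 := by
        intro h1
        have : (1 : ℕ) ∈ T := ⟨S', hS', by rw [hc', hgP, h1]⟩
        have := hthpd_le 1 this
        omega
      omega
    · -- gamma = 2
      left
      have hdom : IsDomSet G S := by
        have := (pds_props G hPDS).2
        rw [hp] at this
        exact this
      have hle2 : gamma G ≤ 2 := hgamma_le 2 ⟨S, hdom, hc⟩
      obtain ⟨S', hS', hc'⟩ := hgamma_mem
      have hne1 : gamma G ≠ 1 := by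
        intro h1
        have := hdom1 S' hS' (by rw [hc', h1])
        omega
      omega
  · -- backward direction
    rintro (hg2 | ⟨hgP, hptG⟩)
    · -- gamma = 2 case
      obtain ⟨S, hS, hc⟩ := hgamma_mem
      rw [hg2] at hc
      obtain ⟨hPDS, hpt⟩ := ptpd_eq_one G hS
      have hmem2 : (2 : ℕ) ∈ T := ⟨S, hPDS, by rw [hc, hpt]⟩
      have hle2 : thpd G ≤ 2 := hthpd_le 2 hmem2
      have hpos : 1 ≤ thpd G := hTpos _ hthpd_mem
      have hne1 : thpd G ≠ 1 := by
        intro h1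
        obtain ⟨S', hS', hprod⟩ := hthpd_mem
        rw [h1] at hprod
        have hc1 : 1 ≤ S'.ncard := pds_ncard_pos G hS'
        have hp1 : 1 ≤ ptpd G S' := (pds_props G hS').1
        have hcard : S'.ncard = 1 := by
          have : S'.ncard ≤ 1 := Nat.le_of_dvd one_pos ⟨ptpd G S', hprod⟩
          omega
        have hpt' : ptpd G S' = 1 := by
          rw [hcard] at hprod
          omega
        have hdomS' : IsDomSet G S' := by
          have := (pds_props G hS').2
          rw [hpt'] at this
          exact this
        have := hgamma_le 1 ⟨S', hdomS', hcard⟩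
        omega
      omega
    · -- gammaP = 1 and ptG = 2 case
      obtain ⟨S0, hS0, hc0⟩ := hgammaP_mem
      have hPtne : {t | ∃ S' : Set V, IsPDS G S' ∧ S'.ncard = gammaP G ∧ t = ptpd G S'}.Nonempty :=
        ⟨_, S0, hS0, hc0, rfl⟩
      have hptG_mem := Nat.sInf_mem hPtne
      obtain ⟨S, hS, hc, hp⟩ := hptG_mem
      have hp2 : ptpd G S = 2 := by rw [← hp]; exact hptG
      have hc1 : S.ncard = 1 := by rw [hc, hgP]
      have hmem2 : (2 : ℕ) ∈ T := ⟨S, hS, by rw [hc1, hp2]⟩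
      have hle2 : thpd G ≤ 2 := hthpd_le 2 hmem2
      have hpos : 1 ≤ thpd G := hTpos _ hthpd_mem
      have hne1 : thpd G ≠ 1 := by
        intro h1
        obtain ⟨S', hS', hprod⟩ := hthpd_mem
        rw [h1] at hprod
        have hc1' : 1 ≤ S'.ncard := pds_ncard_pos G hS'
        have hp1' : 1 ≤ ptpd G S' := (pds_props G hS').1
        have hcard : S'.ncard = 1 := by
          have : S'.ncard ≤ 1 := Nat.le_of_dvd one_pos ⟨ptpd G S', hprod⟩
          omega
        have hpt' : ptpd G S' = 1 := by
          rw [hcard] at hprod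
          omega
        have hmemt : (1 : ℕ) ∈ {t | ∃ S'' : Set V, IsPDS G S'' ∧ S''.ncard = gammaP G ∧ t = ptpd G S''} :=
          ⟨S', hS', by rw [hcard, hgP], hpt'.symm⟩
        have : ptG G ≤ 1 := Nat.sInf_le hmemt
        omega
      omega
end

section
/- If G is a connected unit interval graph with power dominating set S, then for every k ≥ 2, |P^(k)(S)| ≤ 2|S|. -/
open SimpleGraph Set

variable {V : Type*} {W : Type*}

/-!
Say that `w` sees `s` through `A` when `ℓ ⁻¹' uIoo (ℓ s) (ℓ w) ⊆ A`, i.e. `A` contains every vertex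
whose left endpoint lies strictly between those of `s` and `w`. If `u ∈ A` forces `w`, every vertex
strictly between `u` and `w` is a neighbour of `u` other than `w`, hence lies in `A`; so if `u`
sees `s` through `A`, then so does `w`. By induction every observed vertex sees some `s ∈ S`
through the observed set, and every vertex first observed in a round `k ≥ 2` sees some `s ∈ S`
through the set observed after round `k - 1`. Sending such a `w` to its `s` and the side of `s` on
which it lies is injective: of two new vertices on the same side of the same `s`, the nearer one
lies strictly between `s` and the farther one, so it was observed earlier.
-/

lemma uIoo_subset_insert_union {α : Type*} [LinearOrder α] (a b c : α) :
    uIoo a c ⊆ insert b (uIoo a b ∪ uIoo b c) := by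
  intro x hx
  simp only [uIoo_eq_union, mem_insert_iff, mem_union, mem_Ioo] at hx ⊢
  grind

lemma mem_uIoo_or_mem_uIoo_of_lt_iff_lt {α : Type*} [LinearOrder α] {a x y : α}
    (hx : a ≠ x) (hy : a ≠ y) (hxy : x ≠ y) (hside : a < x ↔ a < y) :
    x ∈ uIoo a y ∨ y ∈ uIoo a x := by
  simp only [uIoo_eq_union, mem_union, mem_Ioo]
  grind

lemma obs_subset_succ (G : SimpleGraph V) (S : Set V) : ∀ k, obs G S k ⊆ obs G S (k + 1)
  | 0 => subset_union_left
  | _ + 1 => subset_union_left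

lemma subset_obs (G : SimpleGraph V) (S : Set V) : ∀ k, S ⊆ obs G S k
  | 0 => subset_rfl
  | k + 1 => (subset_obs G S k).trans (obs_subset_succ G S k)

lemma ncard_le_two_mul_ncard_of_preimage_uIoo_subset [Finite V] {ℓ : V → ℝ}
    (hinj : Function.Injective ℓ) {A S T : Set V} (hSA : S ⊆ A) (hTA : Disjoint T A)
    (hT : ∀ w ∈ T, ∃ s ∈ S, ℓ ⁻¹' uIoo (ℓ s) (ℓ w) ⊆ A) :
    T.ncard ≤ 2 * S.ncard := by
  choose! σ hσS hσA using hT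
  have hne : ∀ w ∈ T, ℓ (σ w) ≠ ℓ w := fun w hw h =>
    disjoint_left.1 hTA hw (hinj h ▸ hSA (hσS w hw))
  have hinjOn : InjOn (fun w => (σ w, decide (ℓ (σ w) < ℓ w))) T := by
    intro w hw w' hw' hf
    simp only [Prod.mk.injEq, decide_eq_decide] at hf
    obtain ⟨hσ, hside⟩ := hf
    by_contra hww'
    rw [hσ] at hside
    rcases mem_uIoo_or_mem_uIoo_of_lt_iff_lt (hσ ▸ hne w hw) (hne w' hw') (hinj.ne hww') hside
      with h | h
    · exact disjoint_left.1 hTA hw (hσA w' hw' h)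
    · exact disjoint_left.1 hTA hw' (hσA w hw (hσ ▸ h))
  calc T.ncard ≤ (S ×ˢ (univ : Set Bool)).ncard :=
        ncard_le_ncard_of_injOn _ (fun w hw => ⟨hσS w hw, trivial⟩) hinjOn
    _ = 2 * S.ncard := by
      rw [ncard_prod, ncard_univ, Nat.card_eq_fintype_card, Fintype.card_bool, mul_comm]

section UnitInterval

variable {G : SimpleGraph V} {ℓ : V → ℝ}

lemma adj_of_mem_uIoo (hrep : ∀ u v, G.Adj u v ↔ u ≠ v ∧ |ℓ u - ℓ v| ≤ 1) {u v w : V}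
    (huw : G.Adj u w) (hv : ℓ v ∈ uIoo (ℓ u) (ℓ w)) : G.Adj u v := by
  obtain ⟨-, hdist⟩ := (hrep u w).1 huw
  refine (hrep u v).2 ⟨?_, ?_⟩
  · rintro rfl
    exact left_notMem_uIoo hv
  · rw [uIoo_eq_union] at hv
    rw [abs_le] at hdist ⊢
    rcases hv with ⟨h₁, h₂⟩ | ⟨h₁, h₂⟩ <;> constructor <;> linarith

lemma preimage_uIoo_subset_of_force (hrep : ∀ u v, G.Adj u v ↔ u ≠ v ∧ |ℓ u - ℓ v| ≤ 1)
    {A : Set V} {u w : V} (hforce : G.neighborSet u \ A = {w}) :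
    ℓ ⁻¹' uIoo (ℓ u) (ℓ w) ⊆ A := by
  have huw : G.Adj u w := (hforce ▸ mem_singleton w : w ∈ G.neighborSet u \ A).1
  intro v hv
  by_contra hvA
  have hvw : v ∈ G.neighborSet u \ A := ⟨adj_of_mem_uIoo hrep huw hv, hvA⟩
  rw [hforce, mem_singleton_iff] at hvw
  exact right_notMem_uIoo (hvw ▸ hv)

lemma preimage_uIoo_subset_of_force_of_subset
    (hrep : ∀ u v, G.Adj u v ↔ u ≠ v ∧ |ℓ u - ℓ v| ≤ 1) (hinj : Function.Injective ℓ)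
    {A : Set V} {s u w : V} (hu : u ∈ A) (hsu : ℓ ⁻¹' uIoo (ℓ s) (ℓ u) ⊆ A)
    (hforce : G.neighborSet u \ A = {w}) :
    ℓ ⁻¹' uIoo (ℓ s) (ℓ w) ⊆ A := by
  intro v hv
  rcases uIoo_subset_insert_union _ (ℓ u) _ hv with h | h | h
  · rwa [hinj h]
  · exact hsu h
  · exact preimage_uIoo_subset_of_force hrep hforce h

lemma exists_preimage_uIoo_subset_obs (hrep : ∀ u v, G.Adj u v ↔ u ≠ v ∧ |ℓ u - ℓ v| ≤ 1)
    (hinj : Function.Injective ℓ) (S : Set V) :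
    ∀ k, ∀ u ∈ obs G S k, ∃ s ∈ S, ℓ ⁻¹' uIoo (ℓ s) (ℓ u) ⊆ obs G S k
  | 0, u, hu => ⟨u, hu, by simp⟩
  | 1, u, hu => by
    rcases hu with hu | ⟨s, hs, hsu⟩
    · exact ⟨u, hu, by simp⟩
    · exact ⟨s, hs, fun v hv => Or.inr ⟨s, hs, adj_of_mem_uIoo hrep hsu hv⟩⟩
  | n + 2, u, hu => by
    rcases hu with hu | ⟨u', hu', hforce⟩
    · obtain ⟨s, hs, hsu⟩ := exists_preimage_uIoo_subset_obs hrep hinj S (n + 1) u hu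
      exact ⟨s, hs, hsu.trans (obs_subset_succ G S _)⟩
    · obtain ⟨s, hs, hsu'⟩ := exists_preimage_uIoo_subset_obs hrep hinj S (n + 1) u' hu'
      exact ⟨s, hs, (preimage_uIoo_subset_of_force_of_subset hrep hinj hu' hsu' hforce).trans
        (obs_subset_succ G S _)⟩

lemma exists_preimage_uIoo_subset_of_mem_newObs
    (hrep : ∀ u v, G.Adj u v ↔ u ≠ v ∧ |ℓ u - ℓ v| ≤ 1) (hinj : Function.Injective ℓ)
    {S : Set V} {m : ℕ} {w : V} (hw : w ∈ newObs G S (m + 2)) :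
    ∃ s ∈ S, ℓ ⁻¹' uIoo (ℓ s) (ℓ w) ⊆ obs G S (m + 1) := by
  obtain ⟨hw | ⟨u, hu, hforce⟩, hwnew⟩ := hw
  · exact absurd hw hwnew
  obtain ⟨s, hs, hsu⟩ := exists_preimage_uIoo_subset_obs hrep hinj S (m + 1) u hu
  exact ⟨s, hs, preimage_uIoo_subset_of_force_of_subset hrep hinj hu hsu hforce⟩

end UnitInterval

theorem stmt17_general [Fintype V] (G : SimpleGraph V)
    (ℓ : V → ℝ) (hinj : Function.Injective ℓ)
    (hrep : ∀ u v, G.Adj u v ↔ u ≠ v ∧ |ℓ u - ℓ v| ≤ 1)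
    (S : Set V) :
    ∀ k : ℕ, 2 ≤ k → (newObs G S k).ncard ≤ 2 * S.ncard := by
  intro k hk
  obtain ⟨m, rfl⟩ : ∃ m, k = m + 2 := ⟨k - 2, by omega⟩
  exact ncard_le_two_mul_ncard_of_preimage_uIoo_subset hinj (subset_obs G S (m + 1))
    disjoint_sdiff_left fun w hw => exists_preimage_uIoo_subset_of_mem_newObs hrep hinj hw

theorem stmt17 [Fintype V] (G : SimpleGraph V) (hG : G.Connected)
    (ℓ : V → ℝ) (hinj : Function.Injective ℓ)
    (hrep : ∀ u v, G.Adj u v ↔ u ≠ v ∧ |ℓ u - ℓ v| ≤ 1)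
    (S : Set V) (hS : IsPDS G S) :
    ∀ k : ℕ, 2 ≤ k → (newObs G S k).ncard ≤ 2 * S.ncard :=
  stmt17_general G ℓ hinj hrep S
end
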